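/- arXiv:2202.04443 — 6 statements merged into one kernel-verified Lean document; each statement's English description precedes it below -/
import Mathlib

section
/- For every odd n ∈ ℕ, α⁻¹(n) = 2n+1 > n and α⁻¹(n) is again odd; consequently, for every n > 0, the orbit of n under the associator α is infinite (n is not periodic under α). -/
/-- The associator: α(2m)=4m, α(4m+1)=4m+2, α(4m+3)=2m+1. -/
def alphaFun (n : ℕ) : ℕ :=
  if n % 2 = 0 then 2 * n else if n % 4 = 1 then n + 1 else (n - 1) / 2

/-- The claimed inverse of the associator: β(4m)=2m, β(4m+2)=4m+1, β(2m+1)=4m+3. -/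
def betaFun (n : ℕ) : ℕ :=
  if n % 4 = 0 then n / 2 else if n % 4 = 2 then n - 1 else 2 * n + 1

/-- The associator as a permutation of ℕ. -/
def alphaE : Equiv.Perm ℕ where
  toFun := alphaFun
  invFun := betaFun
  left_inv := by intro n; unfold alphaFun betaFun; split_ifs <;> omega
  right_inv := by intro n; unfold alphaFun betaFun; split_ifs <;> omega

lemma beta_odd {n : ℕ} (h : n % 2 = 1) : betaFun n = 2 * n + 1 := by
  unfold betaFun; split_ifs <;> omega

lemma beta_grow (n : ℕ) (h : n % 2 = 1) (K : ℕ) :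
    n + K ≤ betaFun^[K] n ∧ (betaFun^[K] n) % 2 = 1 := by
  induction K with
  | zero => simpa using h
  | succ k ih =>
    rw [Function.iterate_succ_apply']
    rcases ih with ⟨h1, h2⟩
    rw [beta_odd h2]
    omega

lemma beta_four {n : ℕ} (h : n % 4 = 0) : betaFun n = n / 2 := by
  unfold betaFun; split_ifs <;> omega

lemma beta_pow (n K : ℕ) (h : ∀ i < K, (betaFun^[i] n) % 4 = 0) :
    2 ^ K * betaFun^[K] n = n := by
  induction K with
  | zero => simp
  | succ k ih =>
    have h4 := h k (by omega)
    rw [Function.iterate_succ_apply', beta_four h4, pow_succ]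
    have h2 : 2 * (betaFun^[k] n / 2) = betaFun^[k] n := by omega
    calc 2 ^ k * 2 * (betaFun^[k] n / 2) = 2 ^ k * (2 * (betaFun^[k] n / 2)) := by ring
    _ = 2 ^ k * betaFun^[k] n := by rw [h2]
    _ = n := ih (fun i hi => h i (by omega))

lemma no_beta_cycle (n K : ℕ) (hn : 0 < n) (hK : 0 < K) :
    betaFun^[K] n ≠ n := by
  intro hcyc
  by_cases hall : ∀ i < K, (betaFun^[i] n) % 4 = 0
  · have hp := beta_pow n K hall
    rw [hcyc] at hp
    have h2 : 1 < 2 ^ K := Nat.one_lt_two_pow_iff.mpr (by omega)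
    nlinarith
  · push_neg at hall
    obtain ⟨j, hj, hmod⟩ := hall
    set m := betaFun^[j] n with hm
    have hper : betaFun^[K] m = m := by
      rw [hm, ← Function.iterate_add_apply, Nat.add_comm, Function.iterate_add_apply, hcyc]
    by_cases hodd : m % 2 = 1
    · have := (beta_grow m hodd K).1
      omega
    · -- m % 4 = 2
      have hm2 : m % 4 = 2 := by omega
      have hb : betaFun m = m - 1 := by unfold betaFun; split_ifs <;> omega
      have hodd' : (betaFun m) % 2 = 1 := by omega
      have hper' : betaFun^[K] (betaFun m) = betaFun m := by
        rw [← Function.iterate_succ_apply, Function.iterate_succ_apply', hper]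
      have := (beta_grow (betaFun m) hodd' K).1
      omega

theorem alpha_orbits_infinite :
    (∀ n : ℕ, n % 2 = 1 → alphaE.symm n = 2 * n + 1 ∧ n < alphaE.symm n ∧ (alphaE.symm n) % 2 = 1) ∧
    (∀ n : ℕ, 0 < n → ∀ K : ℕ, 0 < K → alphaFun^[K] n ≠ n) := by
  constructor
  · intro n h
    have he : alphaE.symm n = betaFun n := rfl
    rw [he, beta_odd h]
    omega
  · intro n hn K hK h
    have hli : Function.LeftInverse betaFun alphaFun := alphaE.left_inv
    have : betaFun^[K] n = n := by
      conv_lhs => rw [← h]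
      exact (hli.iterate K) n
    exact no_beta_cycle n K hn hK this
end

section
/- Naturality of the associator: for all bijections f, g, h of ℕ, α ∘ (f ⋆ (g ⋆ h)) = ((f ⋆ g) ⋆ h) ∘ α, where ⋆ is Girard's conjunction and α is the associator. -/
/-- Girard's conjunction: (a⋆b)(2m)=2a(m), (a⋆b)(2m+1)=2b(m)+1. -/
def starFun (a b : ℕ → ℕ) (n : ℕ) : ℕ :=
  if n % 2 = 0 then 2 * a (n / 2) else 2 * b (n / 2) + 1

theorem associator_naturality :
    ∀ f g h : ℕ → ℕ, Function.Bijective f → Function.Bijective g → Function.Bijective h →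
      alphaFun ∘ starFun f (starFun g h) = starFun (starFun f g) h ∘ alphaFun := by
  intro f g h _ _ _
  funext n
  have h4 : n % 4 = 0 ∨ n % 4 = 1 ∨ n % 4 = 2 ∨ n % 4 = 3 := by omega
  rcases h4 with hr | hr | hr | hr
  · obtain ⟨m, rfl⟩ : ∃ m, n = 4 * m := ⟨n / 4, by omega⟩
    simp [alphaFun, starFun, show (4*m)%2=0 by omega, show (4*m)/2=2*m by omega,
      show (2*m)%2=0 by omega, show (2*m)/2=m by omega,
      show (2*(2*f m))%2=0 by omega, show (2*(4*m))%2=0 by omega,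
      show (2*(4*m))/2=4*m by omega, show (2*(2*f m))/2=2*f m by omega]
  · obtain ⟨m, rfl⟩ : ∃ m, n = 4 * m + 1 := ⟨n / 4, by omega⟩
    simp [alphaFun, starFun, show (4*m+1)%2=1 by omega, show (4*m+1)/2=2*m by omega,
      show (2*m)%2=0 by omega, show (2*m)/2=m by omega,
      show (2*(2*g m)+1)%2=1 by omega, show (2*(2*g m)+1)%4=1 by omega,
      show (4*m+1)%4=1 by omega, show (4*m+1+1)%2=0 by omega,
      show (4*m+1+1)/2=2*m+1 by omega, show (2*m+1)%2=1 by omega,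
      show (2*m+1)/2=m by omega]
    omega
  · obtain ⟨m, rfl⟩ : ∃ m, n = 4 * m + 2 := ⟨n / 4, by omega⟩
    simp [alphaFun, starFun, show (4*m+2)%2=0 by omega, show (4*m+2)/2=2*m+1 by omega,
      show (2*f (2*m+1))%2=0 by omega, show (2*(4*m+2))%2=0 by omega,
      show (2*(4*m+2))/2=4*m+2 by omega, show (2*m+1)%2=1 by omega,
      show (2*(2*f (2*m+1)))/2=2*f (2*m+1) by omega,
      show (2*f (2*m+1))/2=f (2*m+1) by omega]
  · obtain ⟨m, rfl⟩ : ∃ m, n = 4 * m + 3 := ⟨n / 4, by omega⟩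
    simp [alphaFun, starFun, show (4*m+3)%2=1 by omega, show (4*m+3)/2=2*m+1 by omega,
      show (2*m+1)%2=1 by omega, show (2*m+1)/2=m by omega,
      show (2*(2*h m+1)+1)%2=1 by omega, show (2*(2*h m+1)+1)%4=3 by omega,
      show (4*m+3)%4=3 by omega, show (4*m+3-1)/2=2*m+1 by omega,
      show 4*m/2=2*m by omega, show (4*m+2)/2=2*m+1 by omega]
end

section
/- Define X₀ = α and X_{j+1} = Id ⋆ X_j for j ≥ 0. Then for all i < j, X_j = X_i ∘ X_{j+1} ∘ X_i⁻¹; equivalently X_i⁻¹ ∘ X_j ∘ X_i = X_{j+1}, i.e. the X_j satisfy the defining relations of Thompson's group F. -/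
/-- Girard's conjunction on permutations of ℕ. -/
def starE (a b : Equiv.Perm ℕ) : Equiv.Perm ℕ where
  toFun := starFun a b
  invFun := starFun a.symm b.symm
  left_inv := by
    intro n; unfold starFun
    by_cases h : n % 2 = 0
    · rw [if_pos h, if_pos (by omega), Nat.mul_div_cancel_left _ (by norm_num),
        Equiv.symm_apply_apply]; omega
    · rw [if_neg h, if_neg (by omega),
        show (2 * (b (n / 2)) + 1) / 2 = b (n / 2) by omega, Equiv.symm_apply_apply]; omega
  right_inv := by
    intro n; unfold starFun
    by_cases h : n % 2 = 0
    · rw [if_pos h, if_pos (by omega), Nat.mul_div_cancel_left _ (by norm_num),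
        Equiv.apply_symm_apply]; omega
    · rw [if_neg h, if_neg (by omega),
        show (2 * (b.symm (n / 2)) + 1) / 2 = b.symm (n / 2) by omega,
        Equiv.apply_symm_apply]; omega

/-- X₀ = α, X_{j+1} = Id ⋆ X_j. -/
def X : ℕ → Equiv.Perm ℕ
  | 0 => alphaE
  | j + 1 => starE (Equiv.refl ℕ) (X j)

section Star

variable (a b c d : Equiv.Perm ℕ) (m : ℕ)

@[simp]
theorem starE_apply_two_mul : starE a b (2 * m) = 2 * a m := by
  simp [starE, starFun]

@[simp]
theorem starE_apply_two_mul_add_one : starE a b (2 * m + 1) = 2 * b m + 1 := by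
  simp [starE, starFun, Nat.add_mod, Nat.add_div]

theorem starE_mul : starE a b * starE c d = starE (a * c) (b * d) := by
  ext n
  obtain ⟨m, rfl | rfl⟩ := n.even_or_odd' <;> simp

theorem starE_one_one : starE 1 1 = 1 := by
  ext n
  obtain ⟨m, rfl | rfl⟩ := n.even_or_odd' <;> simp

end Star

section Associator

variable (m : ℕ)

@[simp]
theorem alphaE_apply_two_mul : alphaE (2 * m) = 2 * (2 * m) := by
  simp [alphaE, alphaFun]

@[simp]
theorem alphaE_apply_four_mul_add_one : alphaE (2 * (2 * m) + 1) = 2 * (2 * m + 1) := by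
  simp only [alphaE, alphaFun, Equiv.coe_fn_mk]
  split_ifs <;> omega

@[simp]
theorem alphaE_apply_four_mul_add_three : alphaE (2 * (2 * m + 1) + 1) = 2 * m + 1 := by
  simp only [alphaE, alphaFun, Equiv.coe_fn_mk]
  split_ifs <;> omega

theorem alphaE_mul_starE_starE (a b c : Equiv.Perm ℕ) :
    alphaE * starE a (starE b c) = starE (starE a b) c * alphaE := by
  ext n
  obtain ⟨m, rfl | rfl⟩ := n.even_or_odd'
  · simp
  · obtain ⟨k, rfl | rfl⟩ := m.even_or_odd' <;> simp

end Associator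

theorem X_succ (j : ℕ) : X (j + 1) = starE 1 (X j) := rfl

theorem X_zero_mul_X_succ_succ (j : ℕ) : X 0 * X (j + 1 + 1) = X (j + 1) * X 0 := by
  rw [X_succ, X_succ, X, alphaE_mul_starE_starE, starE_one_one]

theorem X_mul_X_succ_of_lt {i j : ℕ} (h : i < j) : X i * X (j + 1) = X j * X i := by
  induction i generalizing j with
  | zero =>
    obtain ⟨k, rfl⟩ : ∃ k, j = k + 1 := ⟨j - 1, by omega⟩
    exact X_zero_mul_X_succ_succ k
  | succ i ih =>
    obtain ⟨k, rfl⟩ : ∃ k, j = k + 1 := ⟨j - 1, by omega⟩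
    rw [X_succ k, X_succ (k + 1), X_succ i, starE_mul, starE_mul, ih (by omega)]

theorem thompson_relations :
    ∀ i j : ℕ, i < j → X j = X i * X (j + 1) * (X i)⁻¹ ∧ (X i)⁻¹ * X j * X i = X (j + 1) := by
  intro i j h
  have hcomm := X_mul_X_succ_of_lt h
  constructor
  · rw [hcomm, mul_inv_cancel_right]
  · rw [mul_assoc, ← hcomm, inv_mul_cancel_left]
end

section
/- For all bijections f of ℕ, α ∘ (Id ⋆ (Id ⋆ f)) ∘ α⁻¹ = Id ⋆ f. -/
theorem conjugation_identity :
    ∀ f : Equiv.Perm ℕ,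
      alphaE * starE (Equiv.refl ℕ) (starE (Equiv.refl ℕ) f) * alphaE⁻¹ =
        starE (Equiv.refl ℕ) f := by
  intro f
  ext n
  simp only [Equiv.Perm.mul_apply]
  have hinv : alphaE⁻¹ n = betaFun n := rfl
  rw [hinv]
  show alphaFun (starFun id (starFun id f) (betaFun n)) = starFun id f n
  unfold alphaFun betaFun starFun
  simp only [id]
  have h4 : n % 4 = 0 ∨ n % 4 = 1 ∨ n % 4 = 2 ∨ n % 4 = 3 := by omega
  rcases h4 with h|h|h|h
  · rw [if_pos h]
    split_ifs <;> omega
  · rw [if_neg (by omega : ¬ n % 4 = 0), if_neg (by omega : ¬ n % 4 = 2),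
      show (2*n+1)/2 = n from by omega]
    split_ifs <;> omega
  · rw [if_neg (by omega : ¬ n % 4 = 0), if_pos h]
    split_ifs <;> omega
  · rw [if_neg (by omega : ¬ n % 4 = 0), if_neg (by omega : ¬ n % 4 = 2),
      show (2*n+1)/2 = n from by omega]
    split_ifs <;> omega
end

section
/- Let (f ⋆ g ⋆ h) denote the ternary Girard conjunction: (f⋆g⋆h)(3m) = 3f(m), (f⋆g⋆h)(3m+1) = 3g(m)+1, (f⋆g⋆h)(3m+2) = 3h(m)+2. Then for all bijections f, g, h of ℕ: ρ ∘ (f ⋆ g ⋆ h) = (f ⋆ (g ⋆ h)) ∘ ρ, where ρ is the original Collatz bijection and ⋆ is the binary Girard conjunction. -/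
/-- The original Collatz bijection: ρ(3m)=2m, ρ(3m+1)=4m+1, ρ(3m+2)=4m+3. -/
def rho (n : ℕ) : ℕ :=
  if n % 3 = 0 then 2 * (n / 3) else if n % 3 = 1 then 4 * (n / 3) + 1 else 4 * (n / 3) + 3

/-- Ternary Girard conjunction: (f⋆g⋆h)(3m)=3f(m), (3m+1)↦3g(m)+1, (3m+2)↦3h(m)+2. -/
def star3Fun (f g h : ℕ → ℕ) (n : ℕ) : ℕ :=
  if n % 3 = 0 then 3 * f (n / 3) else if n % 3 = 1 then 3 * g (n / 3) + 1 else 3 * h (n / 3) + 2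

theorem rho_natural_iso :
    ∀ f g h : ℕ → ℕ, Function.Bijective f → Function.Bijective g → Function.Bijective h →
      rho ∘ star3Fun f g h = starFun f (starFun g h) ∘ rho := by
  intro f g h _ _ _
  funext n
  obtain ⟨m, r, hr, rfl⟩ : ∃ m r, r < 3 ∧ n = 3 * m + r :=
    ⟨n / 3, n % 3, Nat.mod_lt _ (by norm_num), by omega⟩
  simp only [Function.comp, rho, star3Fun, starFun]
  interval_cases r
  · simp only [show (3*m+0) % 3 = 0 by omega, show (3*m+0)/3 = m by omega,
      show (3 * f m) % 3 = 0 by omega, show (3 * f m)/3 = f m by omega,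
      show (2*m) % 2 = 0 by omega, show (2*m)/2 = m by omega,
      show (2 * f m) % 2 = 0 by omega, show (2 * f m)/2 = f m by omega, reduceIte]
  · simp only [show (3*m+1) % 3 = 1 by omega, show (3*m+1)/3 = m by omega,
      show (3 * g m + 1) % 3 = 1 by omega, show (3 * g m + 1)/3 = g m by omega,
      show (4*m+1) % 2 = 1 by omega, show (4*m+1)/2 = 2*m by omega,
      show (2*m) % 2 = 0 by omega, show (2*m)/2 = m by omega, reduceIte]
    norm_num
    simp only [show (3 * g m + 1) % 3 = 1 by omega, show (3 * g m + 1)/3 = g m by omega,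
      show (4*m+1) % 2 = 1 by omega, show (4*m+1)/2 = 2*m by omega,
      show (2*m) % 2 = 0 by omega, show (2*m)/2 = m by omega, reduceIte]
    norm_num
    ring
  · simp only [show (3*m+2) % 3 = 2 by omega, show (3*m+2)/3 = m by omega,
      show (3 * h m + 2) % 3 = 2 by omega, show (3 * h m + 2)/3 = h m by omega,
      show (4*m+3) % 2 = 1 by omega, show (4*m+3)/2 = 2*m+1 by omega,
      show (2*m+1) % 2 = 1 by omega, show (2*m+1)/2 = m by omega, reduceIte]
    norm_num
    simp only [show (3 * h m + 2) % 3 = 2 by omega, show (3 * h m + 2)/3 = h m by omega,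
      show (4*m+3) % 2 = 1 by omega, show (4*m+3)/2 = 2*m+1 by omega,
      show (2*m+1) % 2 = 1 by omega, show (2*m+1)/2 = m by omega, reduceIte]
    norm_num
    ring
end

section
/- Let (f ⋆ g ⋆ h) denote the ternary Girard conjunction: (f⋆g⋆h)(3m) = 3f(m), (f⋆g⋆h)(3m+1) = 3g(m)+1, (f⋆g⋆h)(3m+2) = 3h(m)+2. Then for all bijections f, g, h of ℕ: λ ∘ (f ⋆ g ⋆ h) = ((f ⋆ g) ⋆ h) ∘ λ, where λ is the reduced Collatz bijection and ⋆ is the binary Girard conjunction. -/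
/-- The reduced Collatz bijection: λ(3m)=4m, λ(3m+1)=4m+2, λ(3m+2)=2m+1. -/
def lam (n : ℕ) : ℕ :=
  if n % 3 = 0 then 4 * (n / 3) else if n % 3 = 1 then 4 * (n / 3) + 2 else 2 * (n / 3) + 1

theorem lam_natural_iso :
    ∀ f g h : ℕ → ℕ, Function.Bijective f → Function.Bijective g → Function.Bijective h →
      lam ∘ star3Fun f g h = starFun (starFun f g) h ∘ lam := by
  intro f g h _ _ _
  funext n
  have key : n = 3 * (n / 3) ∨ n = 3 * (n / 3) + 1 ∨ n = 3 * (n / 3) + 2 := by omega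
  set m := n / 3 with hm
  simp only [Function.comp_apply, lam, star3Fun, starFun]
  rcases key with hn | hn | hn <;> rw [hn]
  · have e1 : (3 * m) % 3 = 0 := by omega
    have e2 : (3 * m) / 3 = m := by omega
    have e3 : (3 * f m) % 3 = 0 := by omega
    have e4 : (3 * f m) / 3 = f m := by omega
    have e5 : (4 * m) % 2 = 0 := by omega
    have e6 : (4 * m) / 2 = 2 * m := by omega
    have e7 : (2 * m) % 2 = 0 := by omega
    have e8 : (2 * m) / 2 = m := by omega
    simp [e1, e2, e3, e4, e5, e6, e7, e8]; ring
  · have e1 : (3 * m + 1) % 3 = 1 := by omega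
    have e2 : (3 * m + 1) / 3 = m := by omega
    have e3 : (3 * g m + 1) % 3 = 1 := by omega
    have e4 : (3 * g m + 1) / 3 = g m := by omega
    have e5 : (4 * m + 2) % 2 = 0 := by omega
    have e6 : (4 * m + 2) / 2 = 2 * m + 1 := by omega
    have e7 : (2 * m + 1) % 2 = 1 := by omega
    have e8 : (2 * m + 1) / 2 = m := by omega
    simp [e1, e2, e3, e4, e5, e6, e7, e8]; ring
  · have e1 : (3 * m + 2) % 3 = 2 := by omega
    have e2 : (3 * m + 2) / 3 = m := by omega
    have e3 : (3 * h m + 2) % 3 = 2 := by omega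
    have e4 : (3 * h m + 2) / 3 = h m := by omega
    have e5 : (2 * m + 1) % 2 = 1 := by omega
    have e6 : (2 * m + 1) / 2 = m := by omega
    simp [e1, e2, e3, e4, e5, e6]
end
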